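/- For every nonnegative integer k there exist rational numbers A_{2k+2,2l+2} (0 ≤ l ≤ k) with A_{2k+2,2k+2} = 1 such that (1/(2k+1)!) times the 2k-th derivative of 1/sinh^2(x) equals the sum over l from 0 to k of A_{2k+2,2l+2} / sinh^{2l+2}(x), for all x with sinh(x) ≠ 0. -/

import Mathlib

open Real Finset

private def Bco : ℕ → ℕ → ℚ
  | 0, 0 => 1
  | 0, _+1 => 0
  | k+1, 0 => 4 * Bco k 0
  | k+1, l+1 => (2*l+2)*(2*l+3) * Bco k l + (2*l+4)^2 * Bco k (l+1)

private lemma Bco_gt {k l : ℕ} (h : k < l) : Bco k l = 0 := by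
  induction k generalizing l with
  | zero => obtain ⟨m, rfl⟩ := Nat.exists_eq_add_of_lt h; simp [Bco]
  | succ k ih =>
    obtain ⟨m, rfl⟩ := Nat.exists_eq_add_of_lt h
    rw [show k+1+m+1 = (k+m+1)+1 from by omega, Bco,
      ih (by omega : k < k+m+1), ih (by omega : k < k+m+1+1)]
    ring

private lemma Bco_diag (k : ℕ) : Bco k k = (2*k+1).factorial := by
  induction k with
  | zero => simp [Bco]
  | succ k ih =>
    show Bco (k+1) (k+1) = _
    rw [Bco, ih, Bco_gt (by omega)]
    have h : (2*(k+1)+1).factorial = (2*k+3)*((2*k+2)*(2*k+1).factorial) := by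
      rw [show 2*(k+1)+1 = (2*k+2)+1 from by omega, Nat.factorial_succ,
        show 2*k+2 = (2*k+1)+1 from by omega, Nat.factorial_succ]
    rw [h]
    push_cast
    ring

private lemma hasDerivAt_one_div_sinh_pow (n : ℕ) {x : ℝ} (hx : Real.sinh x ≠ 0) :
    HasDerivAt (fun t => 1 / Real.sinh t ^ n)
      (-(n:ℝ) * Real.cosh x / Real.sinh x ^ (n+1)) x := by
  cases n with
  | zero => simpa using hasDerivAt_const x (1:ℝ)
  | succ m =>
    have h1 : HasDerivAt (fun t => Real.sinh t ^ (m+1))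
        ((m+1 : ℕ) * Real.sinh x ^ m * Real.cosh x) x :=
      (Real.hasDerivAt_sinh x).pow (m+1)
    have h2 := h1.fun_inv (pow_ne_zero (m+1) hx)
    have h3 : -((m+1 : ℕ) * Real.sinh x ^ m * Real.cosh x) / (Real.sinh x ^ (m+1)) ^ 2
        = -((m+1 : ℕ):ℝ) * Real.cosh x / Real.sinh x ^ (m+1+1) := by
      rw [← pow_mul]
      rw [show (m+1)*2 = m + (m+1+1) from by omega, pow_add]
      field_simp
    rw [h3] at h2
    simpa [one_div] using h2

private lemma hasDerivAt_cosh_div_sinh_pow (n : ℕ) {x : ℝ} (hx : Real.sinh x ≠ 0) :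
    HasDerivAt (fun t => Real.cosh t / Real.sinh t ^ (n+1))
      (-(n:ℝ) / Real.sinh x ^ n - ((n:ℝ)+1) / Real.sinh x ^ (n+2)) x := by
  have h1 := (Real.hasDerivAt_cosh x).fun_mul (hasDerivAt_one_div_sinh_pow (n+1) hx)
  have h2 : (fun t => Real.cosh t * (1 / Real.sinh t ^ (n+1)))
      = fun t => Real.cosh t / Real.sinh t ^ (n+1) := by
    funext t; rw [mul_one_div]
  rw [h2] at h1
  refine h1.congr_deriv (Eq.symm ?_)
  have hc : Real.cosh x ^ 2 = 1 + Real.sinh x ^ 2 := Real.cosh_sq' x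
  have hs2 : Real.sinh x ^ (n+2) = Real.sinh x ^ n * Real.sinh x ^ 2 := by
    rw [← pow_add]
  push_cast
  field_simp
  linear_combination ((1+(n:ℝ))*Real.sinh x^n*Real.sinh x^(n+1)) * hc

private lemma sum_step (k : ℕ) {s : ℝ} (hs : s ≠ 0) :
    ∑ l ∈ Finset.range (k+1),
        (Bco k l : ℝ) * (-(2*(l:ℝ)+2)) * (-(2*(l:ℝ)+2)/s^(2*l+2) - (2*(l:ℝ)+3)/s^(2*l+4))
      = ∑ l ∈ Finset.range (k+2), (Bco (k+1) l : ℝ) / s^(2*l+2) := by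
  set a : ℕ → ℝ := fun l => (Bco k l : ℝ) * (2*(l:ℝ)+2)^2 / s^(2*l+2) with ha
  set b : ℕ → ℝ := fun l => (Bco k l : ℝ) * (2*(l:ℝ)+2) * (2*(l:ℝ)+3) / s^(2*l+4) with hb
  have hL : ∑ l ∈ Finset.range (k+1),
      (Bco k l : ℝ) * (-(2*(l:ℝ)+2)) * (-(2*(l:ℝ)+2)/s^(2*l+2) - (2*(l:ℝ)+3)/s^(2*l+4))
      = (∑ l ∈ Finset.range (k+1), a l) + ∑ l ∈ Finset.range (k+1), b l := by
    rw [← Finset.sum_add_distrib]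
    refine Finset.sum_congr rfl fun l _ => ?_
    simp only [ha, hb]
    ring
  rw [hL]
  rw [Finset.sum_range_succ' a k]
  have hpad : ∑ l ∈ Finset.range k, a (l+1) = ∑ l ∈ Finset.range (k+1), a (l+1) := by
    rw [Finset.sum_range_succ]
    have : a (k+1) = 0 := by simp [ha, Bco_gt (Nat.lt_succ_self k)]
    rw [this, add_zero]
  rw [hpad]
  rw [Finset.sum_range_succ' (fun l => (Bco (k+1) l : ℝ) / s^(2*l+2)) (k+1)]
  have h0 : a 0 = (Bco (k+1) 0 : ℝ) / s^(2*0+2) := by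
    simp only [ha]
    rw [show Bco (k+1) 0 = 4 * Bco k 0 from rfl]
    push_cast
    ring
  have hmain : ∑ l ∈ Finset.range (k+1), a (l+1) + ∑ l ∈ Finset.range (k+1), b l
      = ∑ l ∈ Finset.range (k+1), (Bco (k+1) (l+1) : ℝ) / s^(2*(l+1)+2) := by
    rw [← Finset.sum_add_distrib]
    refine Finset.sum_congr rfl fun l _ => ?_
    rw [show Bco (k+1) (l+1) = (2*l+2)*(2*l+3) * Bco k l + (2*l+4)^2 * Bco k (l+1) from rfl]
    simp only [ha, hb]
    push_cast
    ring
  rw [add_right_comm, hmain, h0]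

private lemma key (k : ℕ) : ∀ x : ℝ, Real.sinh x ≠ 0 →
    iteratedDeriv (2*k) (fun t => 1 / Real.sinh t ^ 2) x
      = ∑ l ∈ Finset.range (k+1), (Bco k l : ℝ) / Real.sinh x ^ (2*l+2) := by
  induction k with
  | zero =>
    intro x hx
    norm_num [Bco]
  | succ k ih =>
    have hU : IsOpen {y : ℝ | Real.sinh y ≠ 0} :=
      isOpen_compl_singleton.preimage Real.continuous_sinh
    have hg1 : ∀ y : ℝ, Real.sinh y ≠ 0 →
        HasDerivAt (fun t => ∑ l ∈ Finset.range (k+1), (Bco k l : ℝ) / Real.sinh t ^ (2*l+2))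
          (∑ l ∈ Finset.range (k+1),
            (Bco k l : ℝ) * (-(2*(l:ℝ)+2)) * (Real.cosh y / Real.sinh y ^ (2*l+3))) y := by
      intro y hy
      have h := HasDerivAt.fun_sum (fun l (_ : l ∈ Finset.range (k+1)) =>
        ((hasDerivAt_one_div_sinh_pow (2*l+2) hy).const_mul ((Bco k l : ℝ))))
      have h' : (fun t => ∑ l ∈ Finset.range (k+1), (Bco k l : ℝ) * (1 / Real.sinh t ^ (2*l+2)))
          = fun t => ∑ l ∈ Finset.range (k+1), (Bco k l : ℝ) / Real.sinh t ^ (2*l+2) := by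
        funext t
        exact Finset.sum_congr rfl fun l _ => mul_one_div _ _
      rw [h'] at h
      refine h.congr_deriv (Eq.symm ?_)
      refine Finset.sum_congr rfl fun l _ => ?_
      push_cast
      ring
    have hg2 : ∀ y : ℝ, Real.sinh y ≠ 0 →
        HasDerivAt (fun t => ∑ l ∈ Finset.range (k+1),
            (Bco k l : ℝ) * (-(2*(l:ℝ)+2)) * (Real.cosh t / Real.sinh t ^ (2*l+3)))
          (∑ l ∈ Finset.range (k+1),
            (Bco k l : ℝ) * (-(2*(l:ℝ)+2)) * (-(2*(l:ℝ)+2)/Real.sinh y^(2*l+2)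
              - (2*(l:ℝ)+3)/Real.sinh y^(2*l+4))) y := by
      intro y hy
      have h := HasDerivAt.fun_sum (fun l (_ : l ∈ Finset.range (k+1)) =>
        ((hasDerivAt_cosh_div_sinh_pow (2*l+2) hy).const_mul
          ((Bco k l : ℝ) * (-(2*(l:ℝ)+2)))))
      have h' : (fun t => ∑ l ∈ Finset.range (k+1),
          (Bco k l : ℝ) * (-(2*(l:ℝ)+2)) * (Real.cosh t / Real.sinh t ^ (2*l+2+1)))
          = fun t => ∑ l ∈ Finset.range (k+1),
            (Bco k l : ℝ) * (-(2*(l:ℝ)+2)) * (Real.cosh t / Real.sinh t ^ (2*l+3)) := by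
        funext t
        exact Finset.sum_congr rfl fun l _ => rfl
      rw [h'] at h
      refine h.congr_deriv (Eq.symm ?_)
      refine Finset.sum_congr rfl fun l _ => ?_
      push_cast
      ring
    have h1 : ∀ y : ℝ, Real.sinh y ≠ 0 →
        iteratedDeriv (2*k+1) (fun t => 1 / Real.sinh t ^ 2) y
          = ∑ l ∈ Finset.range (k+1),
              (Bco k l : ℝ) * (-(2*(l:ℝ)+2)) * (Real.cosh y / Real.sinh y ^ (2*l+3)) := by
      intro y hy
      rw [iteratedDeriv_succ]
      have heq : iteratedDeriv (2*k) (fun t => 1 / Real.sinh t ^ 2)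
          =ᶠ[nhds y] fun t => ∑ l ∈ Finset.range (k+1), (Bco k l : ℝ) / Real.sinh t ^ (2*l+2) :=
        Filter.eventually_of_mem (hU.mem_nhds hy) (fun z hz => ih z hz)
      rw [heq.deriv_eq]
      exact (hg1 y hy).deriv
    intro x hx
    rw [show 2*(k+1) = (2*k+1)+1 from by omega, iteratedDeriv_succ]
    have heq : iteratedDeriv (2*k+1) (fun t => 1 / Real.sinh t ^ 2)
        =ᶠ[nhds x] fun t => ∑ l ∈ Finset.range (k+1),
          (Bco k l : ℝ) * (-(2*(l:ℝ)+2)) * (Real.cosh t / Real.sinh t ^ (2*l+3)) :=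
      Filter.eventually_of_mem (hU.mem_nhds hx) (fun z hz => h1 z hz)
    rw [heq.deriv_eq, (hg2 x hx).deriv]
    exact sum_step k hx

theorem iteratedDeriv_one_div_sinh_sq :
    ∃ A : ℕ → ℕ → ℚ,
      (∀ k, A k k = 1) ∧
      (∀ k : ℕ, ∀ x : ℝ, Real.sinh x ≠ 0 →
        (1 / (2 * k + 1).factorial : ℝ) *
            iteratedDeriv (2 * k) (fun t => 1 / Real.sinh t ^ 2) x
          = ∑ l ∈ Finset.range (k + 1), (A k l : ℝ) / Real.sinh x ^ (2 * l + 2)) := by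
  refine ⟨fun k l => Bco k l / ((2*k+1).factorial : ℚ), fun k => ?_, fun k x hx => ?_⟩
  · show Bco k k / _ = 1
    rw [Bco_diag k]
    exact div_self (by exact_mod_cast (2*k+1).factorial_ne_zero)
  · show _ = ∑ l ∈ Finset.range (k + 1), ((Bco k l / ((2*k+1).factorial : ℚ) : ℚ) : ℝ) / Real.sinh x ^ (2 * l + 2)
    rw [key k x hx, Finset.mul_sum]
    refine Finset.sum_congr rfl fun l _ => ?_
    have hF : ((2*k+1).factorial : ℝ) ≠ 0 := by exact_mod_cast (2*k+1).factorial_ne_zero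
    push_cast
    field_simp
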